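/- arXiv:2410.06411 — 3 statements merged into one kernel-verified Lean document; each statement's English description precedes it below -/
import Mathlib

section
/- Let G be a subgroup of O(n) acting irreducibly on ℝ^n, and let a be a nonzero skew-symmetric linear transformation of ℝ^n commuting with every element of G. Then there exists λ ∈ ℝ and a linear map J with J² = -id such that a = λ·J. -/
open scoped RealInnerProductSpace

/-!
Since `a` is skew-symmetric, `b = -a²` is symmetric, so it has a real eigenvalue `μ`. Its
eigenspace is invariant under every `g ∈ G` (which commutes with `b`), hence is all of `ℝⁿ` by
irreducibility: `a² = -μ`. Then `μ ‖x‖² = ‖a x‖²`, so `μ > 0` as `a ≠ 0`, and `J = a / √μ`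
satisfies `J² = -1`.
-/

section
variable {E : Type*} [NormedAddCommGroup E] [InnerProductSpace ℝ E]

theorem LinearMap.isSymmetric_neg_comp_self {a : E →ₗ[ℝ] E}
    (hskew : ∀ x y, ⟪a x, y⟫ = -⟪x, a y⟫) : (-(a ∘ₗ a)).IsSymmetric := by
  intro x y
  simp [inner_neg_left, inner_neg_right, hskew]

theorem Module.End.map_eigenspace_le_of_commute {R M : Type*} [CommRing R] [AddCommGroup M]
    [Module R M] {f g : Module.End R M} (h : Commute f g) (μ : R) :
    (f.eigenspace μ).map g ≤ f.eigenspace μ :=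
  Submodule.map_le_iff_le_comap.mpr (mapsTo_genEigenspace_of_comm h μ 1)

theorem LinearMap.IsSymmetric.eq_smul_id_of_irreducible [FiniteDimensional ℝ E] [Nontrivial E]
    (G : Subgroup (E ≃ₗᵢ[ℝ] E))
    (hirr : ∀ W : Submodule ℝ E,
      (∀ g ∈ G, W.map (g : E ≃ₗᵢ[ℝ] E).toLinearIsometry.toLinearMap ≤ W) → W = ⊥ ∨ W = ⊤)
    {b : E →ₗ[ℝ] E} (hb : b.IsSymmetric) (hcomm : ∀ g ∈ G, ∀ x, b (g x) = g (b x)) :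
    ∃ μ : ℝ, b = μ • LinearMap.id := by
  obtain ⟨μ, hμ⟩ : ∃ μ : ℝ, Module.End.HasEigenvalue b μ :=
    ⟨_, hb.hasEigenvalue_iSup_of_finiteDimensional⟩
  have hinv : ∀ g ∈ G, (Module.End.eigenspace b μ).map
      (g : E ≃ₗᵢ[ℝ] E).toLinearIsometry.toLinearMap ≤ Module.End.eigenspace b μ := fun g hg =>
    Module.End.map_eigenspace_le_of_commute (LinearMap.ext (hcomm g hg)) μ
  have htop : Module.End.eigenspace b μ = ⊤ := (hirr _ hinv).resolve_left hμ
  refine ⟨μ, LinearMap.ext fun x => ?_⟩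
  exact Module.End.mem_eigenspace_iff.mp (htop ▸ Submodule.mem_top)

theorem LinearMap.pos_of_neg_comp_self_eq_smul {a : E →ₗ[ℝ] E}
    (hskew : ∀ x y, ⟪a x, y⟫ = -⟪x, a y⟫) (ha : a ≠ 0) {μ : ℝ}
    (hμ : -(a ∘ₗ a) = μ • LinearMap.id) : 0 < μ := by
  obtain ⟨x, hx⟩ := DFunLike.ne_iff.mp ha
  have hx0 : x ≠ 0 := by
    rintro rfl
    exact hx (map_zero a)
  have key : ‖a x‖ ^ 2 = μ * ‖x‖ ^ 2 := by
    calc ‖a x‖ ^ 2 = ⟪(-(a ∘ₗ a)) x, x⟫ := by simp [hskew]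
      _ = μ * ‖x‖ ^ 2 := by rw [hμ]; simp [real_inner_smul_left]
  have : 0 < μ * ‖x‖ ^ 2 := key ▸ by positivity
  exact pos_of_mul_pos_left this (by positivity)

end

theorem LinearMap.exists_eq_smul_of_neg_comp_self_eq_smul {M : Type*} [AddCommGroup M]
    [Module ℝ M] {a : M →ₗ[ℝ] M} {μ : ℝ} (hμ : -(a ∘ₗ a) = μ • LinearMap.id) (hpos : 0 < μ) :
    ∃ (lam : ℝ) (J : M →ₗ[ℝ] M), J ∘ₗ J = -LinearMap.id ∧ a = lam • J := by
  have hs : √μ ≠ 0 := (Real.sqrt_pos.mpr hpos).ne'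
  refine ⟨√μ, (√μ)⁻¹ • a, ?_, by rw [smul_smul, mul_inv_cancel₀ hs, one_smul]⟩
  rw [LinearMap.smul_comp, LinearMap.comp_smul, smul_smul, neg_eq_iff_eq_neg.mp hμ, smul_neg,
    smul_smul, ← mul_inv, Real.mul_self_sqrt hpos.le, inv_mul_cancel₀ hpos.ne', one_smul]

/-- If `G ⊆ O(n)` acts irreducibly on `ℝⁿ` and `a ≠ 0` is a skew-symmetric linear
transformation commuting with every element of `G`, then `a = λ • J` for some real `λ` and
some linear map `J` with `J² = -id`. -/
theorem stmt_1 (n : ℕ)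
    (G : Subgroup (EuclideanSpace ℝ (Fin n) ≃ₗᵢ[ℝ] EuclideanSpace ℝ (Fin n)))
    (hirr : ∀ W : Submodule ℝ (EuclideanSpace ℝ (Fin n)),
      (∀ g ∈ G, W.map (g : EuclideanSpace ℝ (Fin n) ≃ₗᵢ[ℝ]
        EuclideanSpace ℝ (Fin n)).toLinearIsometry.toLinearMap ≤ W) → W = ⊥ ∨ W = ⊤)
    (a : EuclideanSpace ℝ (Fin n) →ₗ[ℝ] EuclideanSpace ℝ (Fin n))
    (hskew : ∀ x y, ⟪a x, y⟫ = -⟪x, a y⟫)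
    (ha : a ≠ 0)
    (hcomm : ∀ g ∈ G, ∀ x, a (g x) = g (a x)) :
    ∃ (lam : ℝ) (J : EuclideanSpace ℝ (Fin n) →ₗ[ℝ] EuclideanSpace ℝ (Fin n)),
      J ∘ₗ J = -LinearMap.id ∧ a = lam • J := by
  have : Nontrivial (EuclideanSpace ℝ (Fin n)) :=
    (subsingleton_or_nontrivial _).resolve_left fun _ => ha (Subsingleton.elim _ _)
  obtain ⟨μ, hμ⟩ := (LinearMap.isSymmetric_neg_comp_self hskew).eq_smul_id_of_irreducible G hirr
    fun g hg x => by simp [hcomm g hg]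
  exact LinearMap.exists_eq_smul_of_neg_comp_self_eq_smul hμ
    (LinearMap.pos_of_neg_comp_self_eq_smul hskew ha hμ)
end

section
/- Let G be a subgroup of O(n) acting irreducibly on ℝ^n, let a ≠ 0 and b be skew-symmetric linear transformations of ℝ^n commuting with every element of G, and suppose a b = b a. Then b = λ a for some real λ. -/
/-!
Both `a ∘ a` and `a ∘ b` are symmetric (a product of commuting skew maps) and commute with `G`.
A symmetric map has a real eigenvalue and its eigenspace is `G`-invariant, so by irreducibility
(Schur) `a ∘ a = μ • 1` and `a ∘ b = ν • 1`, with `μ ≠ 0` because `‖a x‖² = -μ ‖x‖²`.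
Then `μ • b = a ∘ a ∘ b = ν • a`.
-/

open scoped RealInnerProductSpace

variable {E : Type*} [NormedAddCommGroup E] [InnerProductSpace ℝ E]

def ActsIrreducibly (G : Subgroup (E ≃ₗᵢ[ℝ] E)) : Prop :=
  ∀ W : Submodule ℝ E, (∀ g ∈ G, W.map g.toLinearIsometry.toLinearMap ≤ W) → W = ⊥ ∨ W = ⊤

theorem eigenspace_map_le_of_commute {G : Subgroup (E ≃ₗᵢ[ℝ] E)} {s : E →ₗ[ℝ] E}
    (hs : ∀ g ∈ G, ∀ x, s (g x) = g (s x)) (μ : ℝ) :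
    ∀ g ∈ G, (Module.End.eigenspace s μ).map g.toLinearIsometry.toLinearMap ≤
      Module.End.eigenspace s μ := by
  rintro g hg _ ⟨y, hy, rfl⟩
  rw [SetLike.mem_coe, Module.End.mem_eigenspace_iff] at hy
  rw [Module.End.mem_eigenspace_iff]
  simp only [LinearIsometryEquiv.coe_toLinearIsometry, LinearIsometry.coe_toLinearMap]
  rw [hs g hg, hy, map_smul]

theorem eq_smul_id_of_hasEigenvalue_of_commute {G : Subgroup (E ≃ₗᵢ[ℝ] E)}
    (hG : ActsIrreducibly G) {s : E →ₗ[ℝ] E} (hs : ∀ g ∈ G, ∀ x, s (g x) = g (s x)) {μ : ℝ}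
    (hμ : Module.End.HasEigenvalue s μ) : s = μ • LinearMap.id := by
  obtain h | h := hG _ (eigenspace_map_le_of_commute hs μ)
  · exact absurd h hμ
  · ext x
    simpa using Module.End.mem_eigenspace_iff.mp (h ▸ Submodule.mem_top : x ∈ _)

theorem LinearMap.IsSymmetric.exists_eq_smul_id_of_commute [FiniteDimensional ℝ E] [Nontrivial E]
    {G : Subgroup (E ≃ₗᵢ[ℝ] E)} (hG : ActsIrreducibly G) {s : E →ₗ[ℝ] E} (hsymm : s.IsSymmetric)
    (hs : ∀ g ∈ G, ∀ x, s (g x) = g (s x)) : ∃ μ : ℝ, s = μ • LinearMap.id :=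
  ⟨_, eq_smul_id_of_hasEigenvalue_of_commute hG hs hsymm.hasEigenvalue_iSup_of_finiteDimensional⟩

theorem isSymmetric_comp_of_skew {a b : E →ₗ[ℝ] E} (ha : ∀ x y, ⟪a x, y⟫ = -⟪x, a y⟫)
    (hb : ∀ x y, ⟪b x, y⟫ = -⟪x, b y⟫) (hab : a ∘ₗ b = b ∘ₗ a) : (a ∘ₗ b).IsSymmetric := by
  intro x y
  have hab_y : a (b y) = b (a y) := LinearMap.congr_fun hab y
  simp only [LinearMap.comp_apply]
  rw [ha, hb, hab_y, neg_neg]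

theorem comp_commute {G : Subgroup (E ≃ₗᵢ[ℝ] E)} {a b : E →ₗ[ℝ] E}
    (ha : ∀ g ∈ G, ∀ x, a (g x) = g (a x)) (hb : ∀ g ∈ G, ∀ x, b (g x) = g (b x)) :
    ∀ g ∈ G, ∀ x, (a ∘ₗ b) (g x) = g ((a ∘ₗ b) x) := by
  intro g hg x
  simp only [LinearMap.comp_apply, hb g hg, ha g hg]

theorem eq_zero_of_skew_of_comp_self_eq_zero {a : E →ₗ[ℝ] E} (ha : ∀ x y, ⟪a x, y⟫ = -⟪x, a y⟫)
    (haa : a ∘ₗ a = 0) : a = 0 := by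
  ext x
  have : ⟪a x, a x⟫ = 0 := by
    rw [ha, ← LinearMap.comp_apply, haa, LinearMap.zero_apply, inner_zero_right, neg_zero]
  simpa using this

/-- If `G ⊆ O(n)` acts irreducibly on `ℝⁿ`, `a ≠ 0` and `b` are skew-symmetric
linear transformations commuting with every element of `G`, and `ab = ba`, then `b = λ • a`. -/
theorem stmt_2 (n : ℕ)
    (G : Subgroup (EuclideanSpace ℝ (Fin n) ≃ₗᵢ[ℝ] EuclideanSpace ℝ (Fin n)))
    (hirr : ∀ W : Submodule ℝ (EuclideanSpace ℝ (Fin n)),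
      (∀ g ∈ G, W.map (g : EuclideanSpace ℝ (Fin n) ≃ₗᵢ[ℝ]
        EuclideanSpace ℝ (Fin n)).toLinearIsometry.toLinearMap ≤ W) → W = ⊥ ∨ W = ⊤)
    (a b : EuclideanSpace ℝ (Fin n) →ₗ[ℝ] EuclideanSpace ℝ (Fin n))
    (haskew : ∀ x y, ⟪a x, y⟫ = -⟪x, a y⟫)
    (hbskew : ∀ x y, ⟪b x, y⟫ = -⟪x, b y⟫)
    (ha : a ≠ 0)
    (hacomm : ∀ g ∈ G, ∀ x, a (g x) = g (a x))
    (hbcomm : ∀ g ∈ G, ∀ x, b (g x) = g (b x))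
    (hab : a ∘ₗ b = b ∘ₗ a) :
    ∃ lam : ℝ, b = lam • a := by
  obtain ⟨x₀, hx₀⟩ : ∃ x, a x ≠ 0 := by
    by_contra! h
    exact ha (LinearMap.ext h)
  have : Nontrivial (EuclideanSpace ℝ (Fin n)) := nontrivial_of_ne _ _ hx₀
  obtain ⟨μ, hμ⟩ := LinearMap.IsSymmetric.exists_eq_smul_id_of_commute hirr
    (isSymmetric_comp_of_skew haskew haskew rfl) (comp_commute hacomm hacomm)
  obtain ⟨ν, hν⟩ := LinearMap.IsSymmetric.exists_eq_smul_id_of_commute hirr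
    (isSymmetric_comp_of_skew haskew hbskew hab) (comp_commute hacomm hbcomm)
  have hμ0 : μ ≠ 0 := by
    rintro rfl
    exact ha (eq_zero_of_skew_of_comp_self_eq_zero haskew (by simpa using hμ))
  refine ⟨ν / μ, LinearMap.ext fun x => ?_⟩
  have key : μ • b x = ν • a x := by
    have haab : a (a (b x)) = μ • b x := by simpa using LinearMap.congr_fun hμ (b x)
    have hab_x : a (b x) = ν • x := by simpa using LinearMap.congr_fun hν x
    rw [← haab, hab_x, map_smul]
  rw [LinearMap.smul_apply, div_eq_inv_mul, mul_smul, ← key, smul_smul, inv_mul_cancel₀ hμ0,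
    one_smul]
end

section
/- Let ∇ be a connection with ∇J = 0 on an almost complex manifold (M,J) whose Nijenhuis tensor vanishes (J integrable), and suppose the torsion T of ∇ satisfies J∘T = T∘(J ⊗ id) + T∘(id ⊗ J) as a derivation, i.e. J(T(X,Y)) = T(JX,Y) + T(X,JY) for all X,Y. Then T ≡ 0. -/
/-! Expanding the derivation identity with `∇J = 0` expresses `∇_{JX} Y - ∇_{JY} X` through
brackets alone. Substituting this into `T(JX, JY) = J(∇_{JX} Y - ∇_{JY} X) - [JX, JY]` gives
`T(JX, JY) = -N(X, Y) = 0`, and every vector is of the form `JX` because `J² = -1`. -/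

section

variable {R V : Type*} [Semiring R] [AddCommGroup V] [Module R V]

def nijenhuis (J : V →ₗ[R] V) (L : V → V → V) (X Y : V) : V :=
  L (J X) (J Y) - L X Y - J (L X (J Y)) - J (L (J X) Y)

theorem surjective_of_apply_apply_eq_neg {J : V →ₗ[R] V} (hJ2 : ∀ X, J (J X) = -X) :
    Function.Surjective J :=
  fun X => ⟨-J X, by rw [map_neg, hJ2, neg_neg]⟩

variable {J : V →ₗ[R] V} {L D T : V → V → V}

theorem sub_swap_apply_J_of_derivation (hT : ∀ X Y, T X Y = D X Y - D Y X - L X Y)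
    (hDJ : ∀ X Y, D X (J Y) = J (D X Y))
    (hder : ∀ X Y, J (T X Y) = T (J X) Y + T X (J Y)) (X Y : V) :
    D (J X) Y - D (J Y) X = L (J X) Y + L X (J Y) - J (L X Y) := by
  have h := hder X Y
  simp only [hT, hDJ, map_sub] at h
  linear_combination (norm := module) -h

theorem torsion_apply_J_J (hJ2 : ∀ X, J (J X) = -X) (hT : ∀ X Y, T X Y = D X Y - D Y X - L X Y)
    (hDJ : ∀ X Y, D X (J Y) = J (D X Y))
    (hder : ∀ X Y, J (T X Y) = T (J X) Y + T X (J Y)) (X Y : V) :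
    T (J X) (J Y) = -nijenhuis J L X Y := by
  calc T (J X) (J Y) = J (D (J X) Y - D (J Y) X) - L (J X) (J Y) := by
        rw [hT, hDJ, hDJ, map_sub]
    _ = -nijenhuis J L X Y := by
        rw [sub_swap_apply_J_of_derivation hT hDJ hder, nijenhuis]
        simp only [map_add, map_sub, hJ2]
        abel

end

/-- Let `∇` be a connection with `∇J = 0` on an almost complex manifold `(M,J)`
with vanishing Nijenhuis tensor (`J` integrable), and suppose the torsion `T` satisfies the
derivation identity `J(T(X,Y)) = T(JX,Y) + T(X,JY)` for all `X, Y`.  Then `T ≡ 0`.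
The module `V` plays the role of the (real) vector fields, `L` the Lie bracket and
`D` the connection `∇`. -/
theorem stmt_12 (V : Type*) [AddCommGroup V] [Module ℝ V]
    (J : V →ₗ[ℝ] V)
    (hJ2 : ∀ X : V, J (J X) = -X)               -- J² = -id
    (L : V → V → V)                              -- Lie bracket of vector fields
    (D : V → V → V)                              -- the connection ∇
    (hDJ : ∀ X Y : V, D X (J Y) = J (D X Y))     -- ∇J = 0
    (T : V → V → V)
    (hT : ∀ X Y : V, T X Y = D X Y - D Y X - L X Y)
    (hNij : ∀ X Y : V,                           -- Nijenhuis tensor vanishes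
      L (J X) (J Y) - L X Y - J (L X (J Y)) - J (L (J X) Y) = 0)
    (hder : ∀ X Y : V, J (T X Y) = T (J X) Y + T X (J Y)) :
    ∀ X Y : V, T X Y = 0 := by
  intro X Y
  obtain ⟨X, rfl⟩ := surjective_of_apply_apply_eq_neg hJ2 X
  obtain ⟨Y, rfl⟩ := surjective_of_apply_apply_eq_neg hJ2 Y
  rw [torsion_apply_J_J hJ2 hT hDJ hder, neg_eq_zero]
  exact hNij X Y
end
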